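/- arXiv:2502.20286 — 5 statements merged into one kernel-verified Lean document; each statement's English description precedes it below -/
import Mathlib

section
/- Let X be a real I₁ × I₂ matrix with singular value decomposition X = U D Vᵀ, where D = diag(d₁, ..., d_R). Then the minimizer of (1/2)‖X − Y‖_F² + σ‖Y‖_* over all matrices Y is Ŷ = U D̂ Vᵀ, where D̂ = diag(max(d₁ − σ, 0), ..., max(d_R − σ, 0)) and ‖·‖_* denotes the nuclear norm (sum of singular values). -/
/-!
Let `E = U diag(max(d - σ, 0)) Vᵀ`. Then `X - E = σ C` with `C = U diag(min(d / σ, 1)) Vᵀ` a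
contraction. Column-wise Cauchy–Schwarz in an eigenbasis of `YᵀY` gives `tr(Cᵀ Y) ≤ ‖Y‖_*`
for every contraction `C`, while `tr(Cᵀ E) = ∑ max(d - σ, 0) ≥ ‖E‖_*`; so `σ C` is a
subgradient of `σ ‖·‖_*` at `E`. Expanding
`‖X - Y‖² = ‖X - E‖² + ‖E - Y‖² + 2 tr((X - E)ᵀ (E - Y))` then gives the claim.
-/

open Matrix

/-- The nuclear norm of a real matrix: sum of its singular values,
i.e. the square roots of the eigenvalues of `Xᴴ * X`. -/
noncomputable def nuclearNorm {m n : ℕ} (X : Matrix (Fin m) (Fin n) ℝ) : ℝ :=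
  ∑ i, Real.sqrt ((Matrix.isHermitian_conjTranspose_mul_self X).eigenvalues i)

/-- Squared Frobenius norm. -/
def frobSq {m n : ℕ} (X : Matrix (Fin m) (Fin n) ℝ) : ℝ :=
  ∑ i, ∑ j, (X i j) ^ 2

namespace Matrix

variable {m n k : Type*} [Fintype m] [Fintype n]

lemma dotProduct_le_sqrt_mul_sqrt (v w : n → ℝ) : v ⬝ᵥ w ≤ √(v ⬝ᵥ v) * √(w ⬝ᵥ w) := by
  simpa only [dotProduct, sq] using Real.sum_mul_le_sqrt_mul_sqrt Finset.univ v w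

lemma transpose_mulVec_dotProduct (M : Matrix m n ℝ) (v : m → ℝ) (w : n → ℝ) :
    (Mᵀ *ᵥ v) ⬝ᵥ w = v ⬝ᵥ (M *ᵥ w) := by
  rw [mulVec_transpose, dotProduct_mulVec]

lemma trace_transpose_mul_le_sum_sqrt (A B : Matrix m n ℝ) :
    trace (Aᵀ * B) ≤ ∑ j, √((Aᵀ * A) j j) * √((Bᵀ * B) j j) := by
  simp only [trace, diag, mul_apply, transpose_apply]
  gcongr with j
  simpa only [sq] using
    Real.sum_mul_le_sqrt_mul_sqrt Finset.univ (fun i => A i j) (fun i => B i j)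

def IsContraction (G : Matrix m n ℝ) : Prop :=
  ∀ v : n → ℝ, (G *ᵥ v) ⬝ᵥ (G *ᵥ v) ≤ v ⬝ᵥ v

lemma isContraction_of_transpose_mul_self_eq_diagonal [DecidableEq n] {M : Matrix m n ℝ}
    {g : n → ℝ} (hM : Mᵀ * M = diagonal g) (hg : ∀ i, g i ≤ 1) : IsContraction M := by
  intro v
  calc (M *ᵥ v) ⬝ᵥ (M *ᵥ v) = ∑ i, g i * v i ^ 2 := by
        rw [← transpose_mulVec_dotProduct, mulVec_mulVec, hM, dotProduct_comm]
        exact Finset.sum_congr rfl fun i _ => by simp only [mulVec_diagonal]; ring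
    _ ≤ ∑ i, v i ^ 2 :=
        Finset.sum_le_sum fun i _ => mul_le_of_le_one_left (sq_nonneg _) (hg i)
    _ = v ⬝ᵥ v := by simp only [dotProduct, sq]

lemma isContraction_of_transpose_mul_self_eq_one [DecidableEq n] {U : Matrix m n ℝ}
    (hU : Uᵀ * U = 1) : IsContraction U :=
  isContraction_of_transpose_mul_self_eq_diagonal (hU.trans diagonal_one.symm) fun _ => le_rfl

lemma IsContraction.mul [Fintype k] {A : Matrix m n ℝ} {B : Matrix n k ℝ}
    (hA : IsContraction A) (hB : IsContraction B) : IsContraction (A * B) := fun v => by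
  rw [← mulVec_mulVec]
  exact (hA _).trans (hB v)

lemma IsContraction.transpose {G : Matrix m n ℝ} (hG : IsContraction G) :
    IsContraction Gᵀ := by
  intro v
  set a := (Gᵀ *ᵥ v) ⬝ᵥ (Gᵀ *ᵥ v)
  have ha : a ≤ √(v ⬝ᵥ v) * √a := by
    calc a = v ⬝ᵥ (G *ᵥ (Gᵀ *ᵥ v)) := transpose_mulVec_dotProduct _ _ _
      _ ≤ √(v ⬝ᵥ v) * √((G *ᵥ (Gᵀ *ᵥ v)) ⬝ᵥ (G *ᵥ (Gᵀ *ᵥ v))) :=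
          dotProduct_le_sqrt_mul_sqrt _ _
      _ ≤ √(v ⬝ᵥ v) * √a := by gcongr; exact hG _
  have ha0 : 0 ≤ a := Finset.sum_nonneg fun i _ => mul_self_nonneg _
  have hv0 : 0 ≤ v ⬝ᵥ v := Finset.sum_nonneg fun i _ => mul_self_nonneg _
  nlinarith [Real.sq_sqrt ha0, Real.sq_sqrt hv0, Real.sqrt_nonneg a,
    Real.sqrt_nonneg (v ⬝ᵥ v)]

lemma IsContraction.diag_transpose_mul_self_le {G : Matrix m n ℝ} (hG : IsContraction G)
    (W : Matrix n k ℝ) (j : k) : ((G * W)ᵀ * (G * W)) j j ≤ (Wᵀ * W) j j := by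
  have hcol : (G * W)ᵀ j = G *ᵥ Wᵀ j := by ext i; simp [mul_apply, mulVec, dotProduct]
  calc ((G * W)ᵀ * (G * W)) j j = (G *ᵥ Wᵀ j) ⬝ᵥ (G *ᵥ Wᵀ j) := by rw [← hcol]; rfl
    _ ≤ Wᵀ j ⬝ᵥ Wᵀ j := hG _

lemma IsContraction.trace_transpose_mul_le [Fintype k] [DecidableEq k] {G Y : Matrix m n ℝ}
    (hG : IsContraction G) {W : Matrix n k ℝ} (hW : Wᵀ * W = 1) (hYW : Y * W * Wᵀ = Y) :
    trace (Gᵀ * Y) ≤ ∑ j, √(((Y * W)ᵀ * (Y * W)) j j) := by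
  calc trace (Gᵀ * Y) = trace ((G * W)ᵀ * (Y * W)) := by
        nth_rw 1 [← hYW]
        rw [← Matrix.mul_assoc, trace_mul_comm, transpose_mul, Matrix.mul_assoc]
    _ ≤ ∑ j, √(((G * W)ᵀ * (G * W)) j j) * √(((Y * W)ᵀ * (Y * W)) j j) :=
        trace_transpose_mul_le_sum_sqrt _ _
    _ ≤ ∑ j, √(((Y * W)ᵀ * (Y * W)) j j) := by
        gcongr with j
        refine mul_le_of_le_one_left (Real.sqrt_nonneg _) (Real.sqrt_le_one.mpr ?_)
        simpa [hW] using hG.diag_transpose_mul_self_le W j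

lemma transpose_mul_diagonal_mul_mul_diagonal [DecidableEq n] {U : Matrix m n ℝ}
    (hU : Uᵀ * U = 1) (a b : n → ℝ) :
    (U * diagonal a)ᵀ * (U * diagonal b) = diagonal fun i => a i * b i := by
  rw [transpose_mul, diagonal_transpose, Matrix.mul_assoc, ← Matrix.mul_assoc Uᵀ, hU,
    Matrix.one_mul, diagonal_mul_diagonal]

lemma isContraction_mul_diagonal_mul_transpose [Fintype k] [DecidableEq k]
    {U : Matrix m k ℝ} {V : Matrix n k ℝ} (hU : Uᵀ * U = 1) (hV : Vᵀ * V = 1) {c : k → ℝ}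
    (hc : ∀ i, |c i| ≤ 1) :
    IsContraction (U * diagonal c * Vᵀ) :=
  (isContraction_of_transpose_mul_self_eq_diagonal
      (transpose_mul_diagonal_mul_mul_diagonal hU c c)
      fun i => abs_le_one_iff_mul_self_le_one.mp (hc i)).mul
    (isContraction_of_transpose_mul_self_eq_one hV).transpose

end Matrix

section

variable {m n : ℕ}

lemma exists_orthogonal_transpose_mul_self_eq_diagonal (Y : Matrix (Fin m) (Fin n) ℝ) :
    ∃ (W : Matrix (Fin n) (Fin n) ℝ) (μ : Fin n → ℝ), Wᵀ * W = 1 ∧ W * Wᵀ = 1 ∧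
      (Y * W)ᵀ * (Y * W) = diagonal μ ∧ nuclearNorm Y = ∑ j, √(μ j) := by
  set hH := isHermitian_conjTranspose_mul_self Y
  have hW := hH.eigenvectorUnitary.2
  refine ⟨hH.eigenvectorUnitary, hH.eigenvalues, ?_, ?_, ?_, rfl⟩
  · simpa [← conjTranspose_eq_transpose_of_trivial, star_eq_conjTranspose] using
      mem_unitaryGroup_iff'.mp hW
  · simpa [← conjTranspose_eq_transpose_of_trivial, star_eq_conjTranspose] using
      mem_unitaryGroup_iff.mp hW
  · have := hH.conjStarAlgAut_star_eigenvectorUnitary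
    simp only [Unitary.conjStarAlgAut_star_apply, conjTranspose_eq_transpose_of_trivial,
      star_eq_conjTranspose, Function.comp_def, RCLike.ofReal_real_eq_id, id] at this
    rwa [transpose_mul, Matrix.mul_assoc, ← Matrix.mul_assoc Yᵀ, ← Matrix.mul_assoc]

lemma trace_transpose_mul_le_nuclearNorm {G : Matrix (Fin m) (Fin n) ℝ} (hG : G.IsContraction)
    (Y : Matrix (Fin m) (Fin n) ℝ) : trace (Gᵀ * Y) ≤ nuclearNorm Y := by
  obtain ⟨W, μ, hW, hW', hYW, hY⟩ := exists_orthogonal_transpose_mul_self_eq_diagonal Y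
  calc trace (Gᵀ * Y) ≤ ∑ j, √(((Y * W)ᵀ * (Y * W)) j j) :=
        hG.trace_transpose_mul_le hW (by rw [Matrix.mul_assoc, hW', Matrix.mul_one])
    _ = nuclearNorm Y := by simp only [hYW, hY, diagonal_apply_eq]

/-- The junk value `0⁻¹ = 0` makes the witness vanish on the kernel of `Y`. -/
lemma exists_isContraction_trace_eq_nuclearNorm (Y : Matrix (Fin m) (Fin n) ℝ) :
    ∃ G : Matrix (Fin m) (Fin n) ℝ, G.IsContraction ∧ trace (Gᵀ * Y) = nuclearNorm Y := by
  obtain ⟨W, μ, hW, hW', hYW, hY⟩ := exists_orthogonal_transpose_mul_self_eq_diagonal Y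
  set e : Fin n → ℝ := fun j => (√(μ j))⁻¹
  have heμ : ∀ j, e j * μ j = √(μ j) := by
    intro j
    rcases le_or_gt (μ j) 0 with h | h
    · simp [e, Real.sqrt_eq_zero'.mpr h]
    · rw [inv_mul_eq_iff_eq_mul₀ (Real.sqrt_pos.2 h).ne', Real.mul_self_sqrt h.le]
  have hM : (Y * W * diagonal e)ᵀ * (Y * W * diagonal e) =
      diagonal fun j => e j * μ j * e j := by
    rw [transpose_mul, diagonal_transpose, Matrix.mul_assoc, ← Matrix.mul_assoc (Y * W)ᵀ, hYW,
      ← Matrix.mul_assoc, diagonal_mul_diagonal, diagonal_mul_diagonal]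
  refine ⟨Y * W * diagonal e * Wᵀ, ?_, ?_⟩
  · refine (isContraction_of_transpose_mul_self_eq_diagonal hM fun j => ?_).mul
      (isContraction_of_transpose_mul_self_eq_one (by rwa [transpose_transpose]))
    rw [heμ]
    by_cases h : √(μ j) = 0 <;> simp [e, h]
  · rw [transpose_mul, transpose_transpose, Matrix.mul_assoc, trace_mul_comm, Matrix.mul_assoc,
      transpose_mul, diagonal_transpose, Matrix.mul_assoc, hYW, diagonal_mul_diagonal,
      trace_diagonal, hY]
    simp only [heμ]

lemma nuclearNorm_mul_diagonal_mul_transpose_le {r : ℕ} {U : Matrix (Fin m) (Fin r) ℝ}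
    {V : Matrix (Fin n) (Fin r) ℝ} (hU : Uᵀ * U = 1) (hV : Vᵀ * V = 1) {f : Fin r → ℝ}
    (hf : ∀ i, 0 ≤ f i) : nuclearNorm (U * diagonal f * Vᵀ) ≤ ∑ i, f i := by
  obtain ⟨G, hG, hGY⟩ := exists_isContraction_trace_eq_nuclearNorm (U * diagonal f * Vᵀ)
  have hYV : U * diagonal f * Vᵀ * V = U * diagonal f := by
    rw [Matrix.mul_assoc, hV, Matrix.mul_one]
  calc nuclearNorm (U * diagonal f * Vᵀ)
      ≤ ∑ i, √(((U * diagonal f * Vᵀ * V)ᵀ * (U * diagonal f * Vᵀ * V)) i i) :=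
        hGY ▸ hG.trace_transpose_mul_le hV (by rw [hYV])
    _ = ∑ i, f i := by
        simp only [hYV, transpose_mul_diagonal_mul_mul_diagonal hU, diagonal_apply_eq,
          Real.sqrt_mul_self (hf _)]

lemma trace_transpose_mul_diagonal_mul_transpose {r : ℕ} {U : Matrix (Fin m) (Fin r) ℝ}
    {V : Matrix (Fin n) (Fin r) ℝ} (hU : Uᵀ * U = 1) (hV : Vᵀ * V = 1) (a b : Fin r → ℝ) :
    trace ((U * diagonal a * Vᵀ)ᵀ * (U * diagonal b * Vᵀ)) = ∑ i, a i * b i := by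
  rw [transpose_mul, transpose_transpose, Matrix.mul_assoc, trace_mul_comm, ← Matrix.mul_assoc,
    Matrix.mul_assoc, Matrix.mul_assoc, hV, Matrix.mul_one,
    transpose_mul_diagonal_mul_mul_diagonal hU, trace_diagonal]

lemma frobSq_add (A B : Matrix (Fin m) (Fin n) ℝ) :
    frobSq (A + B) = frobSq A + frobSq B + 2 * trace (Aᵀ * B) := by
  have htrace : trace (Aᵀ * B) = ∑ i, ∑ j, A i j * B i j := by
    simp only [trace, diag, mul_apply, transpose_apply]
    exact Finset.sum_comm
  simp only [htrace, frobSq, Matrix.add_apply, add_sq, Finset.sum_add_distrib, Finset.mul_sum,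
    mul_assoc]
  ring

lemma frobSq_nonneg (A : Matrix (Fin m) (Fin n) ℝ) : 0 ≤ frobSq A :=
  Finset.sum_nonneg fun _ _ => Finset.sum_nonneg fun _ _ => sq_nonneg _

lemma half_frobSq_add_nuclearNorm_le {X E C : Matrix (Fin m) (Fin n) ℝ} {σ : ℝ}
    (hσ : 0 ≤ σ) (hC : C.IsContraction) (hXE : X - E = σ • C)
    (hE : nuclearNorm E ≤ trace (Cᵀ * E)) (Y : Matrix (Fin m) (Fin n) ℝ) :
    (1 / 2) * frobSq (X - E) + σ * nuclearNorm E ≤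
      (1 / 2) * frobSq (X - Y) + σ * nuclearNorm Y := by
  have hsplit : frobSq (X - Y) =
      frobSq (X - E) + frobSq (E - Y) + 2 * σ * (trace (Cᵀ * E) - trace (Cᵀ * Y)) := by
    rw [show X - Y = (X - E) + (E - Y) by abel, frobSq_add, hXE, transpose_smul, smul_mul,
      trace_smul, Matrix.mul_sub, trace_sub, smul_eq_mul]
    ring
  nlinarith [frobSq_nonneg (E - Y), mul_le_mul_of_nonneg_left hE hσ,
    mul_le_mul_of_nonneg_left (trace_transpose_mul_le_nuclearNorm hC Y) hσ]

end

lemma sub_max_sub_zero_eq_mul_min_div_one {a σ : ℝ} (hσ : 0 < σ) :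
    a - max (a - σ) 0 = σ * min (a / σ) 1 := by
  rcases le_total a σ with h | h
  · rw [max_eq_right (by linarith), min_eq_left ((div_le_one hσ).2 h),
      mul_div_cancel₀ _ hσ.ne', sub_zero]
  · rw [max_eq_left (by linarith), min_eq_right ((one_le_div hσ).2 h)]
    ring

lemma min_div_one_mul_max_sub_zero {a σ : ℝ} (hσ : 0 < σ) :
    min (a / σ) 1 * max (a - σ) 0 = max (a - σ) 0 := by
  rcases le_total a σ with h | h
  · rw [max_eq_right (by linarith), mul_zero]
  · rw [min_eq_right ((one_le_div hσ).2 h), one_mul]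

theorem stmt3 {I₁ I₂ R : ℕ} (X : Matrix (Fin I₁) (Fin I₂) ℝ)
    (U : Matrix (Fin I₁) (Fin R) ℝ) (V : Matrix (Fin I₂) (Fin R) ℝ)
    (d : Fin R → ℝ) (hd : ∀ r, 0 ≤ d r)
    (hU : Uᵀ * U = 1) (hV : Vᵀ * V = 1)
    (hX : X = U * Matrix.diagonal d * Vᵀ) (σ : ℝ) (hσ : 0 < σ) :
    ∀ Y : Matrix (Fin I₁) (Fin I₂) ℝ,
      (1 / 2) * frobSq (X - U * Matrix.diagonal (fun r => max (d r - σ) 0) * Vᵀ) +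
        σ * nuclearNorm (U * Matrix.diagonal (fun r => max (d r - σ) 0) * Vᵀ) ≤
      (1 / 2) * frobSq (X - Y) + σ * nuclearNorm Y := by
  intro Y
  set s : Fin R → ℝ := fun r => max (d r - σ) 0
  set c : Fin R → ℝ := fun r => min (d r / σ) 1
  have hc : ∀ r, |c r| ≤ 1 := fun r =>
    abs_le.2 ⟨le_min (by linarith [div_nonneg (hd r) hσ.le]) (by norm_num), min_le_right _ _⟩
  have hXE : X - U * diagonal s * Vᵀ = σ • (U * diagonal c * Vᵀ) := by
    rw [hX, ← Matrix.sub_mul, ← Matrix.mul_sub, diagonal_sub, ← Matrix.smul_mul,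
      ← Matrix.mul_smul, ← diagonal_smul]
    congr 3
    exact funext fun r => sub_max_sub_zero_eq_mul_min_div_one hσ
  refine half_frobSq_add_nuclearNorm_le hσ.le
    (isContraction_mul_diagonal_mul_transpose hU hV hc) hXE ?_ Y
  calc nuclearNorm (U * diagonal s * Vᵀ) ≤ ∑ r, s r :=
        nuclearNorm_mul_diagonal_mul_transpose_le hU hV fun r => le_max_right _ _
    _ = trace ((U * diagonal c * Vᵀ)ᵀ * (U * diagonal s * Vᵀ)) := by
        rw [trace_transpose_mul_diagonal_mul_transpose hU hV]
        simp only [c, s, min_div_one_mul_max_sub_zero hσ]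
end

section
/- Let 𝒳 ∈ ℝ^{m×n×k} be a three-way tensor and σ > 0. Then min over a ∈ ℝ^m, b ∈ ℝ^n, c ∈ ℝ^k of ‖𝒳 − a∘b∘c‖_F² + σ(‖a‖² + ‖b‖² + ‖c‖²) equals min over λ ≥ 0 and unit vectors ã, b̃, c̃ of ‖𝒳 − λ ã∘b̃∘c̃‖_F² + 3σλ^{2/3}. -/
/-- Euclidean norm of a vector. -/
noncomputable def enorm {m : ℕ} (a : Fin m → ℝ) : ℝ := Real.sqrt (∑ i, (a i) ^ 2)

/-- Rank-1 three-way outer product tensor. -/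
def outer3 {m n k : ℕ} (a : Fin m → ℝ) (b : Fin n → ℝ) (c : Fin k → ℝ) :
    Fin m → Fin n → Fin k → ℝ :=
  fun i j l => a i * b j * c l

/-- Squared Frobenius norm of a three-way tensor. -/
def frobSq3 {m n k : ℕ} (X : Fin m → Fin n → Fin k → ℝ) : ℝ :=
  ∑ i, ∑ j, ∑ l, (X i j l) ^ 2

/-!
Writing each factor as its norm times a unit vector, `a ∘ b ∘ c = (‖a‖ ‖b‖ ‖c‖) ã ∘ b̃ ∘ c̃`, and by
AM–GM `‖a‖² + ‖b‖² + ‖c‖² ≥ 3 (‖a‖ ‖b‖ ‖c‖)^{2/3}`, so every value of the factor-penalized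
objective dominates a value of the weight-penalized one. Conversely, spreading the weight evenly,
`aᵢ = λ^{1/3} ãᵢ`, turns the weight penalty into the factor penalty with equality. Hence the two
value sets have the same infimum. When one dimension is zero there are no unit vectors, and both
sides are `0`: the right-hand side as `sInf ∅`, the left-hand side as the value at `a = b = c = 0`.
-/

namespace Tensor3

lemma enorm_eq_norm_toLp {m : ℕ} (a : Fin m → ℝ) :
    _root_.enorm a = ‖(WithLp.toLp 2 a : EuclideanSpace ℝ (Fin m))‖ := by
  simp [_root_.enorm, EuclideanSpace.norm_eq]

lemma enorm_nonneg {m : ℕ} (a : Fin m → ℝ) : 0 ≤ _root_.enorm a :=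
  Real.sqrt_nonneg _

lemma enorm_smul {m : ℕ} (t : ℝ) (a : Fin m → ℝ) :
    _root_.enorm (t • a) = |t| * _root_.enorm a := by
  simp only [enorm_eq_norm_toLp, WithLp.toLp_smul, norm_smul, Real.norm_eq_abs]

lemma enorm_eq_zero {m : ℕ} {a : Fin m → ℝ} : _root_.enorm a = 0 ↔ a = 0 := by
  simp [enorm_eq_norm_toLp]

lemma exists_enorm_eq_one_iff {m : ℕ} : (∃ u : Fin m → ℝ, _root_.enorm u = 1) ↔ 0 < m := by
  refine ⟨fun ⟨u, hu⟩ => Nat.pos_of_ne_zero ?_, fun hm => ⟨Pi.single ⟨0, hm⟩ 1, ?_⟩⟩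
  · rintro rfl
    simp [_root_.enorm] at hu
  · simp [_root_.enorm, Pi.single_apply]

lemma exists_enorm_eq_one_and_eq_smul {m : ℕ} (hm : 0 < m) (a : Fin m → ℝ) :
    ∃ u : Fin m → ℝ, _root_.enorm u = 1 ∧ a = _root_.enorm a • u := by
  by_cases ha : _root_.enorm a = 0
  · obtain ⟨u, hu⟩ := exists_enorm_eq_one_iff.2 hm
    exact ⟨u, hu, by rw [ha, zero_smul, ← enorm_eq_zero, ha]⟩
  · refine ⟨(_root_.enorm a)⁻¹ • a, ?_, (smul_inv_smul₀ ha a).symm⟩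
    rw [enorm_smul, abs_inv, abs_of_nonneg (enorm_nonneg a), inv_mul_cancel₀ ha]

lemma outer3_smul {m n k : ℕ} (s t r : ℝ) (a : Fin m → ℝ) (b : Fin n → ℝ) (c : Fin k → ℝ) :
    outer3 (s • a) (t • b) (r • c) = (s * t * r) • outer3 a b c := by
  funext i j l
  simp only [outer3, Pi.smul_apply, smul_eq_mul]
  ring

lemma frobSq3_nonneg {m n k : ℕ} (X : Fin m → Fin n → Fin k → ℝ) : 0 ≤ frobSq3 X := by
  unfold frobSq3
  positivity

lemma three_mul_mul_rpow_two_div_three_le {x y z : ℝ} (hx : 0 ≤ x) (hy : 0 ≤ y) (hz : 0 ≤ z) :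
    3 * (x * y * z) ^ ((2 : ℝ) / 3) ≤ x ^ 2 + y ^ 2 + z ^ 2 := by
  have amgm := Real.geom_mean_le_arith_mean3_weighted (w₁ := 1 / 3) (w₂ := 1 / 3) (w₃ := 1 / 3)
    (by norm_num) (by norm_num) (by norm_num) (sq_nonneg x) (sq_nonneg y) (sq_nonneg z)
    (by norm_num)
  have sq_rpow : ∀ w : ℝ, 0 ≤ w → (w ^ 2) ^ ((1 : ℝ) / 3) = w ^ ((2 : ℝ) / 3) := fun w hw => by
    rw [← Real.rpow_natCast, ← Real.rpow_mul hw]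
    norm_num
  rw [sq_rpow x hx, sq_rpow y hy, sq_rpow z hz] at amgm
  rw [Real.mul_rpow (by positivity) hz, Real.mul_rpow hx hy]
  linarith

section Objectives

variable {m n k : ℕ} (X : Fin m → Fin n → Fin k → ℝ) (σ : ℝ)

noncomputable def factorPenalized (a : Fin m → ℝ) (b : Fin n → ℝ) (c : Fin k → ℝ) : ℝ :=
  frobSq3 (fun i j l => X i j l - outer3 a b c i j l) +
    σ * (_root_.enorm a ^ 2 + _root_.enorm b ^ 2 + _root_.enorm c ^ 2)

noncomputable def weightPenalized (lam : ℝ) (a : Fin m → ℝ) (b : Fin n → ℝ) (c : Fin k → ℝ) :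
    ℝ :=
  frobSq3 (fun i j l => X i j l - lam * outer3 a b c i j l) + 3 * σ * lam ^ ((2 : ℝ) / 3)

def factorPenalizedValues : Set ℝ :=
  {v | ∃ a b c, v = factorPenalized X σ a b c}

def weightPenalizedValues : Set ℝ :=
  {v | ∃ lam a b c, 0 ≤ lam ∧ _root_.enorm a = 1 ∧ _root_.enorm b = 1 ∧ _root_.enorm c = 1 ∧
    v = weightPenalized X σ lam a b c}

variable {X σ}

lemma factorPenalized_nonneg (hσ : 0 ≤ σ) (a : Fin m → ℝ) (b : Fin n → ℝ) (c : Fin k → ℝ) :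
    0 ≤ factorPenalized X σ a b c :=
  add_nonneg (frobSq3_nonneg _) (by positivity)

lemma factorPenalized_zero (hdim : m = 0 ∨ n = 0 ∨ k = 0) : factorPenalized X σ 0 0 0 = 0 := by
  rcases hdim with rfl | rfl | rfl <;> simp [factorPenalized, frobSq3, _root_.enorm]

lemma weightPenalized_eq_factorPenalized {lam : ℝ} (hlam : 0 ≤ lam) {a : Fin m → ℝ}
    {b : Fin n → ℝ} {c : Fin k → ℝ} (ha : _root_.enorm a = 1) (hb : _root_.enorm b = 1)
    (hc : _root_.enorm c = 1) :
    weightPenalized X σ lam a b c =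
      factorPenalized X σ (lam ^ (3⁻¹ : ℝ) • a) (lam ^ (3⁻¹ : ℝ) • b) (lam ^ (3⁻¹ : ℝ) • c) := by
  set t := lam ^ (3⁻¹ : ℝ)
  have ht : 0 ≤ t := Real.rpow_nonneg hlam _
  have ht_cube : t * t * t = lam := by
    rw [← pow_three', ← Real.rpow_natCast, ← Real.rpow_mul hlam]
    norm_num
  have ht_sq : t ^ 2 = lam ^ ((2 : ℝ) / 3) := by
    rw [← Real.rpow_natCast, ← Real.rpow_mul hlam]
    norm_num
  simp only [factorPenalized, weightPenalized, outer3_smul, ht_cube, enorm_smul, ha, hb, hc,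
    abs_of_nonneg ht, Pi.smul_apply, smul_eq_mul]
  rw [← ht_sq]
  ring

lemma exists_weightPenalized_le_factorPenalized (hσ : 0 ≤ σ) (hm : 0 < m) (hn : 0 < n)
    (hk : 0 < k) (a : Fin m → ℝ) (b : Fin n → ℝ) (c : Fin k → ℝ) :
    ∃ lam u v w, 0 ≤ lam ∧ _root_.enorm u = 1 ∧ _root_.enorm v = 1 ∧ _root_.enorm w = 1 ∧
      weightPenalized X σ lam u v w ≤ factorPenalized X σ a b c := by
  obtain ⟨u, hu, hau⟩ := exists_enorm_eq_one_and_eq_smul hm a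
  obtain ⟨v, hv, hbv⟩ := exists_enorm_eq_one_and_eq_smul hn b
  obtain ⟨w, hw, hcw⟩ := exists_enorm_eq_one_and_eq_smul hk c
  set A := _root_.enorm a
  set B := _root_.enorm b
  set C := _root_.enorm c
  have houter : outer3 a b c = (A * B * C) • outer3 u v w := by
    conv_lhs => rw [hau, hbv, hcw]
    exact outer3_smul A B C u v w
  have hA := enorm_nonneg a
  have hB := enorm_nonneg b
  have hC := enorm_nonneg c
  have hpenalty : 3 * σ * (A * B * C) ^ ((2 : ℝ) / 3) ≤ σ * (A ^ 2 + B ^ 2 + C ^ 2) :=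
    calc 3 * σ * (A * B * C) ^ ((2 : ℝ) / 3) = σ * (3 * (A * B * C) ^ ((2 : ℝ) / 3)) := by ring
      _ ≤ σ * (A ^ 2 + B ^ 2 + C ^ 2) :=
        mul_le_mul_of_nonneg_left (three_mul_mul_rpow_two_div_three_le hA hB hC) hσ
  refine ⟨A * B * C, u, v, w, by positivity, hu, hv, hw, ?_⟩
  simp only [weightPenalized, factorPenalized, houter, Pi.smul_apply, smul_eq_mul]
  linarith

end Objectives

end Tensor3

open Tensor3 in
theorem stmt7 {m n k : ℕ} (X : Fin m → Fin n → Fin k → ℝ) (σ : ℝ) (hσ : 0 < σ) :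
    sInf {v : ℝ | ∃ (a : Fin m → ℝ) (b : Fin n → ℝ) (c : Fin k → ℝ),
        v = frobSq3 (fun i j l => X i j l - outer3 a b c i j l) +
          σ * (_root_.enorm a ^ 2 + _root_.enorm b ^ 2 + _root_.enorm c ^ 2)} =
    sInf {v : ℝ | ∃ (lam : ℝ) (a : Fin m → ℝ) (b : Fin n → ℝ) (c : Fin k → ℝ),
        0 ≤ lam ∧ _root_.enorm a = 1 ∧ _root_.enorm b = 1 ∧ _root_.enorm c = 1 ∧
        v = frobSq3 (fun i j l => X i j l - lam * outer3 a b c i j l) +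
          3 * σ * lam ^ ((2 : ℝ) / 3)} := by
  change sInf (factorPenalizedValues X σ) = sInf (weightPenalizedValues X σ)
  by_cases hdim : 0 < m ∧ 0 < n ∧ 0 < k
  · obtain ⟨hm, hn, hk⟩ := hdim
    apply csInf_eq_csInf_of_forall_exists_le
    · rintro _ ⟨a, b, c, rfl⟩
      obtain ⟨lam, u, v, w, hlam, hu, hv, hw, hle⟩ :=
        exists_weightPenalized_le_factorPenalized hσ.le hm hn hk a b c
      exact ⟨_, ⟨lam, u, v, w, hlam, hu, hv, hw, rfl⟩, hle⟩
    · rintro _ ⟨lam, a, b, c, hlam, ha, hb, hc, rfl⟩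
      exact ⟨_, ⟨_, _, _, weightPenalized_eq_factorPenalized hlam ha hb hc⟩, le_rfl⟩
  · have hempty : weightPenalizedValues X σ = ∅ := by
      refine Set.eq_empty_of_forall_notMem ?_
      rintro _ ⟨lam, a, b, c, -, ha, hb, hc, -⟩
      exact hdim ⟨exists_enorm_eq_one_iff.1 ⟨a, ha⟩, exists_enorm_eq_one_iff.1 ⟨b, hb⟩,
        exists_enorm_eq_one_iff.1 ⟨c, hc⟩⟩
    have hzero : factorPenalized X σ 0 0 0 = 0 := factorPenalized_zero (by omega)
    rw [hempty, Real.sInf_empty]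
    refine IsLeast.csInf_eq ⟨⟨0, 0, 0, hzero.symm⟩, ?_⟩
    rintro _ ⟨a, b, c, rfl⟩
    exact factorPenalized_nonneg hσ.le a b c
end

section
/- Let 𝒳 be an N-way tensor and σ > 0, and consider rank-R CP approximations. Then min over factor matrices A₁, ..., A_N (each with R columns) of ‖𝒳 − Σ_{r=1}^R a_{1r}∘⋯∘a_{Nr}‖_F² + σ Σ_{i=1}^N ‖A_i‖_F² equals min over nonnegative weights λ₁, ..., λ_R and normalized factor matrices Ã₁, ..., Ã_N (all columns of unit Euclidean norm) of ‖𝒳 − Σ_{r=1}^R λ_r ã_{1r}∘⋯∘ã_{Nr}‖_F² + Nσ Σ_{r=1}^R λ_r^{2/N}. -/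
/-!
Writing each column as `a_{ir} = ‖a_{ir}‖ ã_{ir}` with `‖ã_{ir}‖ = 1` and setting
`λ_r = ∏_i ‖a_{ir}‖` leaves the CP tensor unchanged, and by AM-GM
`∑_i ‖a_{ir}‖² ≥ N λ_r^{2/N}`. Conversely, scaling every unit column of a weighted
decomposition by `λ_r^{1/N}` attains that bound with equality. Hence every value of either
objective is dominated by a value of the other, and the infima coincide. If some mode has
length zero, both infima are `0`.
-/

/-- Euclidean norm of a vector. -/
noncomputable def vecEnorm {m : ℕ} (a : Fin m → ℝ) : ℝ := Real.sqrt (∑ i, (a i) ^ 2)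

open Finset

theorem vecEnorm_sq {m : ℕ} (a : Fin m → ℝ) : vecEnorm a ^ 2 = ∑ j, a j ^ 2 :=
  Real.sq_sqrt (sum_nonneg fun j _ => sq_nonneg (a j))

theorem vecEnorm_nonneg {m : ℕ} (a : Fin m → ℝ) : 0 ≤ vecEnorm a :=
  Real.sqrt_nonneg _

theorem vecEnorm_eq_one_iff {m : ℕ} (a : Fin m → ℝ) : vecEnorm a = 1 ↔ ∑ j, a j ^ 2 = 1 :=
  Real.sqrt_eq_one

theorem exists_vecEnorm_eq_one_and_eq_smul {m : ℕ} (hm : 0 < m) (a : Fin m → ℝ) :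
    ∃ u : Fin m → ℝ, vecEnorm u = 1 ∧ a = vecEnorm a • u := by
  by_cases ha : vecEnorm a = 0
  · refine ⟨Pi.single ⟨0, hm⟩ 1, ?_, ?_⟩
    · simp [vecEnorm_eq_one_iff, Pi.single_apply]
    · have : ∑ j, a j ^ 2 = 0 := by rw [← vecEnorm_sq, ha, sq, zero_mul]
      rw [ha, zero_smul]
      funext j
      exact pow_eq_zero_iff two_ne_zero |>.mp <|
        (sum_eq_zero_iff_of_nonneg fun j _ => sq_nonneg (a j)).mp this j (mem_univ j)
  · refine ⟨(vecEnorm a)⁻¹ • a, ?_, by rw [smul_smul, mul_inv_cancel₀ ha, one_smul]⟩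
    rw [vecEnorm_eq_one_iff]
    simp only [Pi.smul_apply, smul_eq_mul, mul_pow, ← mul_sum, ← vecEnorm_sq, inv_pow]
    exact inv_mul_cancel₀ (pow_ne_zero 2 ha)

theorem vecEnorm_of_isEmpty {m : ℕ} [IsEmpty (Fin m)] (a : Fin m → ℝ) : vecEnorm a = 0 := by
  simp [vecEnorm]

theorem Real.card_mul_prod_rpow_two_div_card_le_sum_sq {ι : Type*} [Fintype ι] {x : ι → ℝ}
    (hx : ∀ i, 0 ≤ x i) :
    (Fintype.card ι : ℝ) * (∏ i, x i) ^ (2 / (Fintype.card ι : ℝ)) ≤ ∑ i, x i ^ 2 := by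
  rcases isEmpty_or_nonempty ι with hι | hι
  · simp
  have hcard : (0 : ℝ) < Fintype.card ι := by exact_mod_cast Fintype.card_pos
  have amgm := Real.geom_mean_le_arith_mean univ (fun _ => 1) (fun i => x i ^ 2)
    (fun _ _ => zero_le_one) (by simpa using hcard) (fun i _ => sq_nonneg (x i))
  simp only [Real.rpow_one, sum_const, card_univ, nsmul_eq_mul, mul_one, one_mul] at amgm
  rwa [prod_pow, ← Real.rpow_natCast, ← Real.rpow_mul (prod_nonneg fun i _ => hx i),
    le_div_iff₀ hcard, mul_comm, Nat.cast_ofNat, ← div_eq_mul_inv] at amgm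

section CPDecomposition

variable {N R : ℕ} {I : Fin N → ℕ}

def cpLoss (X : ((i : Fin N) → Fin (I i)) → ℝ) (σ : ℝ)
    (A : (i : Fin N) → Fin (I i) → Fin R → ℝ) : ℝ :=
  (∑ idx : (i : Fin N) → Fin (I i), (X idx - ∑ r : Fin R, ∏ i, A i (idx i) r) ^ 2) +
    σ * ∑ i, ∑ j, ∑ r, A i j r ^ 2

noncomputable def weightedCpLoss (X : ((i : Fin N) → Fin (I i)) → ℝ) (σ : ℝ) (lam : Fin R → ℝ)
    (A : (i : Fin N) → Fin (I i) → Fin R → ℝ) : ℝ :=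
  (∑ idx : (i : Fin N) → Fin (I i), (X idx - ∑ r : Fin R, lam r * ∏ i, A i (idx i) r) ^ 2) +
    (N : ℝ) * σ * ∑ r, lam r ^ ((2 : ℝ) / N)

variable (X : ((i : Fin N) → Fin (I i)) → ℝ) (σ : ℝ)

theorem cpLoss_nonneg (hσ : 0 ≤ σ) (A : (i : Fin N) → Fin (I i) → Fin R → ℝ) :
    0 ≤ cpLoss X σ A := by
  unfold cpLoss
  have := fun i j r => sq_nonneg (A i j r)
  positivity

theorem sum_sq_eq_sum_vecEnorm_sq (A : (i : Fin N) → Fin (I i) → Fin R → ℝ) :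
    ∑ i, ∑ j, ∑ r, A i j r ^ 2 = ∑ r, ∑ i, vecEnorm (fun j => A i j r) ^ 2 := by
  simp only [vecEnorm_sq]
  rw [sum_comm]
  exact sum_congr rfl fun i _ => sum_comm

theorem cpLoss_rescale (hN : N ≠ 0) {lam : Fin R → ℝ} (hlam : ∀ r, 0 ≤ lam r)
    {A : (i : Fin N) → Fin (I i) → Fin R → ℝ} (hA : ∀ i r, vecEnorm (fun j => A i j r) = 1) :
    cpLoss X σ (fun i j r => lam r ^ (N : ℝ)⁻¹ * A i j r) = weightedCpLoss X σ lam A := by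
  have hprod (idx : (i : Fin N) → Fin (I i)) (r : Fin R) :
      ∏ i, lam r ^ (N : ℝ)⁻¹ * A i (idx i) r = lam r * ∏ i, A i (idx i) r := by
    rw [prod_mul_distrib, prod_const, card_univ, Fintype.card_fin,
      Real.rpow_inv_natCast_pow (hlam r) hN]
  have hsq (r : Fin R) : (lam r ^ (N : ℝ)⁻¹) ^ 2 = lam r ^ ((2 : ℝ) / N) := by
    rw [← Real.rpow_natCast, ← Real.rpow_mul (hlam r), Nat.cast_ofNat, div_eq_inv_mul, mul_comm]
  have hpen : ∑ i, ∑ j, ∑ r, (lam r ^ (N : ℝ)⁻¹ * A i j r) ^ 2 = N * ∑ r, lam r ^ ((2 : ℝ) / N) :=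
    calc ∑ i, ∑ j, ∑ r, (lam r ^ (N : ℝ)⁻¹ * A i j r) ^ 2
        = ∑ i : Fin N, ∑ r, lam r ^ ((2 : ℝ) / N) * ∑ j, A i j r ^ 2 := by
          simp only [mul_pow, hsq, mul_sum]
          exact sum_congr rfl fun i _ => sum_comm
      _ = N * ∑ r, lam r ^ ((2 : ℝ) / N) := by
          simp [(vecEnorm_eq_one_iff _).mp (hA _ _)]
  simp only [cpLoss, weightedCpLoss, hprod, hpen]
  ring

theorem natCast_mul_sum_prod_vecEnorm_rpow_le_sum_sq (A : (i : Fin N) → Fin (I i) → Fin R → ℝ) :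
    N * ∑ r, (∏ i, vecEnorm (fun j => A i j r)) ^ ((2 : ℝ) / N) ≤ ∑ i, ∑ j, ∑ r, A i j r ^ 2 := by
  rw [sum_sq_eq_sum_vecEnorm_sq, mul_sum]
  refine sum_le_sum fun r _ => ?_
  simpa only [Fintype.card_fin] using
    Real.card_mul_prod_rpow_two_div_card_le_sum_sq (ι := Fin N) fun i => vecEnorm_nonneg _

theorem exists_weightedCpLoss_le_cpLoss (hσ : 0 ≤ σ) (hI : ∀ i, 0 < I i)
    (A : (i : Fin N) → Fin (I i) → Fin R → ℝ) :
    ∃ (lam : Fin R → ℝ) (B : (i : Fin N) → Fin (I i) → Fin R → ℝ),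
      (∀ r, 0 ≤ lam r) ∧ (∀ i r, vecEnorm (fun j => B i j r) = 1) ∧
      weightedCpLoss X σ lam B ≤ cpLoss X σ A := by
  choose B hB hAB using fun i r => exists_vecEnorm_eq_one_and_eq_smul (hI i) (fun j => A i j r)
  refine ⟨fun r => ∏ i, vecEnorm (fun j => A i j r), fun i j r => B i r j,
    fun r => prod_nonneg fun i _ => vecEnorm_nonneg _, hB, ?_⟩
  have hprod (idx : (i : Fin N) → Fin (I i)) (r : Fin R) :
      ∏ i, A i (idx i) r = (∏ i, vecEnorm (fun j => A i j r)) * ∏ i, B i r (idx i) := by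
    rw [← prod_mul_distrib]
    exact prod_congr rfl fun i _ => congrFun (hAB i r) (idx i)
  have hpen := mul_le_mul_of_nonneg_left (natCast_mul_sum_prod_vecEnorm_rpow_le_sum_sq A) hσ
  simp only [cpLoss, weightedCpLoss, hprod]
  linarith

theorem sInf_cpLoss_eq_zero_of_isEmpty [IsEmpty ((i : Fin N) → Fin (I i))] (hσ : 0 ≤ σ) :
    sInf {v | ∃ A : (i : Fin N) → Fin (I i) → Fin R → ℝ, v = cpLoss X σ A} = 0 := by
  refine IsLeast.csInf_eq ⟨⟨0, by simp [cpLoss]⟩, ?_⟩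
  rintro _ ⟨A, rfl⟩
  exact cpLoss_nonneg X σ hσ A

theorem weightedCpLoss_eq_zero_of_isEmpty {i₀ : Fin N} [IsEmpty (Fin (I i₀))] {lam : Fin R → ℝ}
    {A : (i : Fin N) → Fin (I i) → Fin R → ℝ} (hA : ∀ i r, vecEnorm (fun j => A i j r) = 1) :
    weightedCpLoss X σ lam A = 0 := by
  have : IsEmpty (Fin R) := ⟨fun r => by simpa [vecEnorm_of_isEmpty] using hA i₀ r⟩
  have : IsEmpty ((i : Fin N) → Fin (I i)) := ⟨fun idx => isEmptyElim (idx i₀)⟩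
  simp [weightedCpLoss]

-- With an empty mode no column has unit norm, so the feasible set is `∅` when `R > 0`
-- (and `sInf ∅ = 0` in `ℝ`) and `{0}` when `R = 0`.
theorem sInf_weightedCpLoss_eq_zero_of_isEmpty {i₀ : Fin N} [IsEmpty (Fin (I i₀))] :
    sInf {v | ∃ (lam : Fin R → ℝ) (A : (i : Fin N) → Fin (I i) → Fin R → ℝ),
      (∀ r, 0 ≤ lam r) ∧ (∀ i r, vecEnorm (fun j => A i j r) = 1) ∧
      v = weightedCpLoss X σ lam A} = 0 := by
  have hsub : {v | ∃ (lam : Fin R → ℝ) (A : (i : Fin N) → Fin (I i) → Fin R → ℝ),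
      (∀ r, 0 ≤ lam r) ∧ (∀ i r, vecEnorm (fun j => A i j r) = 1) ∧
      v = weightedCpLoss X σ lam A} ⊆ {0} := by
    rintro _ ⟨lam, A, -, hA, rfl⟩
    exact weightedCpLoss_eq_zero_of_isEmpty X σ (i₀ := i₀) hA
  rcases Set.subset_singleton_iff_eq.mp hsub with h | h <;> rw [h]
  exacts [Real.sInf_empty, csInf_singleton 0]

end CPDecomposition

theorem stmt8 {N R : ℕ} {I : Fin N → ℕ} (X : ((i : Fin N) → Fin (I i)) → ℝ)
    (σ : ℝ) (hσ : 0 < σ) (hN : 0 < N) :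
    sInf {v : ℝ | ∃ A : (i : Fin N) → (Fin (I i) → Fin R → ℝ),
        v = (∑ idx : (i : Fin N) → Fin (I i),
              (X idx - ∑ r : Fin R, ∏ i, A i (idx i) r) ^ 2) +
            σ * ∑ i, ∑ j, ∑ r, (A i j r) ^ 2} =
    sInf {v : ℝ | ∃ (lam : Fin R → ℝ) (A : (i : Fin N) → (Fin (I i) → Fin R → ℝ)),
        (∀ r, 0 ≤ lam r) ∧ (∀ i r, vecEnorm (fun j => A i j r) = 1) ∧
        v = (∑ idx : (i : Fin N) → Fin (I i),
              (X idx - ∑ r : Fin R, lam r * ∏ i, A i (idx i) r) ^ 2) +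
            (N : ℝ) * σ * ∑ r, (lam r) ^ ((2 : ℝ) / N)} := by
  by_cases hI : ∀ i, 0 < I i
  · refine csInf_eq_csInf_of_forall_exists_le ?_ ?_
    · rintro _ ⟨A, rfl⟩
      obtain ⟨lam, B, hlam, hB, hle⟩ := exists_weightedCpLoss_le_cpLoss X σ hσ.le hI A
      exact ⟨_, ⟨lam, B, hlam, hB, rfl⟩, hle⟩
    · rintro _ ⟨lam, A, hlam, hA, rfl⟩
      exact ⟨cpLoss X σ _, ⟨_, rfl⟩, (cpLoss_rescale X σ hN.ne' hlam hA).le⟩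
  · obtain ⟨i₀, hi₀⟩ := not_forall.mp hI
    have : IsEmpty (Fin (I i₀)) := ⟨fun j => hi₀ j.pos⟩
    have : IsEmpty ((i : Fin N) → Fin (I i)) := ⟨fun idx => isEmptyElim (idx i₀)⟩
    exact (sInf_cpLoss_eq_zero_of_isEmpty X σ hσ.le).trans
      (sInf_weightedCpLoss_eq_zero_of_isEmpty X σ (i₀ := i₀)).symm
end

section
/- Let N > 2, σ > 0, and λ̂ ≥ 0. The function g(λ) = (λ − λ̂)² + Nσλ^{2/N} on [0, ∞) has a minimizer λ* satisfying λ* < λ̂ whenever λ̂ > 0; moreover there exists a threshold t(σ, N) > 0 such that λ* = 0 whenever λ̂ ≤ t(σ, N). -/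
/-!
Write `f(x) = (x - a)² + c xᵖ` with `a = λ̂`, `c = Nσ > 0` and `p = 2/N ∈ (0, 1)`. On `[a, ∞)`
both terms increase, so a minimizer over `[0, ∞)` exists and can be taken in the compact interval
`[0, a]`. It is not `a` itself when `a > 0`: there `f` is differentiable with
`f'(a) = c p a^(p-1) > 0`, while an interior minimizer would have vanishing derivative. Finally
`x ≤ x² + xᵖ` for `x ≥ 0` (use `x²` when `x ≥ 1` and `xᵖ` when `x ≤ 1`), so for
`a ≤ min 1 c / 2` the linear term `-2ax` of `f(x) - f(0) = x² - 2ax + c xᵖ` is dominated and `0`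
is a minimizer.
-/

open Set

theorem self_le_sq_add_rpow {x p : ℝ} (hx : 0 ≤ x) (hp : p ≤ 1) : x ≤ x ^ 2 + x ^ p := by
  rcases le_total x 1 with hx1 | hx1
  · linarith [Real.self_le_rpow_of_le_one hx hx1 hp, sq_nonneg x]
  · nlinarith [Real.rpow_nonneg hx p]

noncomputable def penalizedLoss (a c p x : ℝ) : ℝ := (x - a) ^ 2 + c * x ^ p

namespace penalizedLoss

variable {a c p : ℝ}

theorem continuous (hp : 0 ≤ p) : Continuous (penalizedLoss a c p) :=
  ((continuous_id.sub continuous_const).pow 2).add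
    (continuous_const.mul (Real.continuous_rpow_const hp))

theorem apply_le_of_le (ha : 0 ≤ a) (hc : 0 ≤ c) (hp : 0 ≤ p) {x : ℝ} (hx : a ≤ x) :
    penalizedLoss a c p a ≤ penalizedLoss a c p x := by
  have hpow : c * a ^ p ≤ c * x ^ p := by gcongr
  unfold penalizedLoss
  nlinarith [sq_nonneg (x - a)]

theorem exists_mem_Icc_isMinOn (ha : 0 ≤ a) (hc : 0 ≤ c) (hp : 0 ≤ p) :
    ∃ m ∈ Icc 0 a, IsMinOn (penalizedLoss a c p) (Ici 0) m := by
  obtain ⟨m, hm, hmin⟩ := isCompact_Icc.exists_isMinOn (nonempty_Icc.2 ha)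
    (continuous hp).continuousOn
  refine ⟨m, hm, fun x (hx : 0 ≤ x) => ?_⟩
  rcases le_total x a with hxa | hax
  · exact hmin ⟨hx, hxa⟩
  · exact (hmin ⟨ha, le_rfl⟩).trans (apply_le_of_le ha hc hp hax)

theorem hasDerivAt {x : ℝ} (hx : x ≠ 0) :
    HasDerivAt (penalizedLoss a c p) (2 * (x - a) + c * (p * x ^ (p - 1))) x := by
  have hsq : HasDerivAt (fun y => (y - a) ^ 2) (2 * (x - a)) x := by
    simpa using ((hasDerivAt_id' x).sub_const a).fun_pow 2
  exact hsq.add ((Real.hasDerivAt_rpow_const (Or.inl hx)).const_mul c)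

theorem not_isMinOn_self (ha : 0 < a) (hc : 0 < c) (hp : 0 < p) :
    ¬ IsMinOn (penalizedLoss a c p) (Ici 0) a := fun hmin => by
  have hderiv := (hmin.isLocalMin (Ici_mem_nhds ha)).hasDerivAt_eq_zero (hasDerivAt ha.ne')
  have : 0 < c * (p * a ^ (p - 1)) := by positivity
  linarith

theorem isMinOn_zero (hc : 0 ≤ c) (hp₀ : 0 < p) (hp₁ : p ≤ 1) (hat : a ≤ min 1 c / 2) :
    IsMinOn (penalizedLoss a c p) (Ici 0) 0 := by
  intro x (hx : 0 ≤ x)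
  have hxp : 0 ≤ x ^ p := Real.rpow_nonneg hx p
  have hlin : 2 * a * x ≤ x ^ 2 + c * x ^ p :=
    calc 2 * a * x ≤ min 1 c * x := by nlinarith
      _ ≤ min 1 c * (x ^ 2 + x ^ p) := by gcongr; exact self_le_sq_add_rpow hx hp₁
      _ ≤ x ^ 2 + c * x ^ p := by
        nlinarith [min_le_left 1 c, min_le_right 1 c, le_min zero_le_one hc, sq_nonneg x]
  show penalizedLoss a c p 0 ≤ penalizedLoss a c p x
  simp only [penalizedLoss, Real.zero_rpow hp₀.ne']
  nlinarith

end penalizedLoss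

theorem stmt9 (N : ℕ) (hN : 2 < N) (σ : ℝ) (hσ : 0 < σ) :
    ∃ t : ℝ, 0 < t ∧
      ∀ lamhat : ℝ, 0 ≤ lamhat →
        ∃ lamstar : ℝ, 0 ≤ lamstar ∧
          (∀ lam : ℝ, 0 ≤ lam →
            (lamstar - lamhat) ^ 2 + (N : ℝ) * σ * lamstar ^ ((2 : ℝ) / N) ≤
              (lam - lamhat) ^ 2 + (N : ℝ) * σ * lam ^ ((2 : ℝ) / N)) ∧
          (0 < lamhat → lamstar < lamhat) ∧
          (lamhat ≤ t → lamstar = 0) := by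
  have hc : 0 < (N : ℝ) * σ := by positivity
  have hp₀ : 0 < (2 : ℝ) / N := by positivity
  have hp₁ : (2 : ℝ) / N ≤ 1 := (div_le_one (by positivity)).2 (by exact_mod_cast hN.le)
  refine ⟨min 1 (N * σ) / 2, by positivity, fun a ha => ?_⟩
  by_cases hat : a ≤ min 1 (N * σ) / 2
  · exact ⟨0, le_rfl, fun x hx => penalizedLoss.isMinOn_zero hc.le hp₀ hp₁ hat hx,
      id, fun _ => rfl⟩
  obtain ⟨m, ⟨hm₀, hma⟩, hmin⟩ := penalizedLoss.exists_mem_Icc_isMinOn ha hc.le hp₀.le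
  refine ⟨m, hm₀, fun x hx => hmin hx, fun ha₀ => hma.lt_of_ne ?_, fun h => absurd h hat⟩
  rintro rfl
  exact penalizedLoss.not_isMinOn_self ha₀ hc hp₀ hmin
end

section
/- Let 𝒳 be an N-way tensor and suppose (λ̂, â₁, ..., â_N) with λ̂ ≥ 0 and unit vectors â_i minimizes ‖𝒳 − λ â₁∘⋯∘â_N‖_F² over λ ≥ 0 and unit vectors. Then for any σ > 0, a minimizer of the penalized rank-1 problem ‖𝒳 − λ a₁∘⋯∘a_N‖_F² + Nσλ^{2/N} over λ ≥ 0 and unit vectors a₁, ..., a_N is given by (λ̂_p, â₁, ..., â_N), where λ̂_p = argmin_{λ ≥ 0} (λ − λ̂)² + Nσλ^{2/N}. -/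
/-- Squared Frobenius norm of the residual of a rank-1 CP approximation of an
N-way tensor with weight `lam` and factor vectors `a i`. -/
def resid {N : ℕ} {I : Fin N → ℕ} (X : ((i : Fin N) → Fin (I i)) → ℝ)
    (lam : ℝ) (a : (i : Fin N) → Fin (I i) → ℝ) : ℝ :=
  ∑ idx : (i : Fin N) → Fin (I i), (X idx - lam * ∏ i, a i (idx i)) ^ 2

/-!
For unit factors the residual is `‖X‖² - 2λc(a) + λ²` with `c(a) = ⟨X, a₁∘⋯∘a_N⟩`. Minimality of
`(λ̂, â)` gives `λ̂ (λ̂ - c(â)) = 0` and `c(a) ≤ λ̂` for all unit factors, hence the residual is at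
least `‖X‖² - λ̂² + (λ - λ̂)²`, with equality at `â` whenever `λ (λ̂ - c(â)) = 0`. A penalty
monotone in `λ` thus reduces the penalized problem to the scalar one defining `λ̂_p`, and comparing
with `λ = λ̂` shows `λ̂_p ≤ λ̂`, which keeps `â` in the equality case.
-/

open Finset

/-- The pairing `⟨X, a₁∘⋯∘a_N⟩` of a tensor with a rank-1 tensor. -/
def rankOneInner {N : ℕ} {I : Fin N → ℕ} (X : ((i : Fin N) → Fin (I i)) → ℝ)
    (a : (i : Fin N) → Fin (I i) → ℝ) : ℝ :=
  ∑ idx, X idx * ∏ i, a i (idx i)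

lemma sum_sq_eq_one_of_enorm_eq_one {m : ℕ} {a : Fin m → ℝ} (h : _root_.enorm a = 1) :
    ∑ i, a i ^ 2 = 1 :=
  Real.sqrt_eq_one.mp h

lemma resid_eq_of_enorm_eq_one {N : ℕ} {I : Fin N → ℕ} (X : ((i : Fin N) → Fin (I i)) → ℝ)
    (lam : ℝ) {a : (i : Fin N) → Fin (I i) → ℝ} (hu : ∀ i, _root_.enorm (a i) = 1) :
    resid X lam a = ∑ idx, X idx ^ 2 - 2 * lam * rankOneInner X a + lam ^ 2 := by
  have hnorm : ∑ idx : (i : Fin N) → Fin (I i), ∏ i, a i (idx i) ^ 2 = 1 :=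
    calc _ = ∏ i, ∑ j, a i j ^ 2 := by rw [prod_univ_sum, Fintype.piFinset_univ]
      _ = 1 := prod_eq_one fun i _ => sum_sq_eq_one_of_enorm_eq_one (hu i)
  rw [resid, rankOneInner, ← mul_one (lam ^ 2), ← hnorm, mul_sum, mul_sum,
    ← sum_sub_distrib, ← sum_add_distrib]
  refine sum_congr rfl fun idx _ => ?_
  rw [prod_pow]
  ring

lemma mul_sub_eq_zero_of_forall_sq_sub_le {lh c : ℝ} (hlh : 0 ≤ lh)
    (hmin : ∀ μ, 0 ≤ μ → lh ^ 2 - 2 * lh * c ≤ μ ^ 2 - 2 * μ * c) : lh * (lh - c) = 0 := by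
  rcases le_or_gt 0 c with hc | hc
  · have := hmin c hc
    have : lh - c = 0 := by nlinarith [sq_nonneg (lh - c)]
    rw [this, mul_zero]
  · have := hmin 0 le_rfl
    have : lh = 0 := by nlinarith
    rw [this, zero_mul]

lemma mul_sub_eq_zero_and_rankOneInner_le_of_isMin {N : ℕ} {I : Fin N → ℕ}
    {X : ((i : Fin N) → Fin (I i)) → ℝ} {lh : ℝ} {ah : (i : Fin N) → Fin (I i) → ℝ}
    (hlh : 0 ≤ lh) (hunit : ∀ i, _root_.enorm (ah i) = 1)
    (hmin : ∀ (lam : ℝ) (a : (i : Fin N) → Fin (I i) → ℝ),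
      0 ≤ lam → (∀ i, _root_.enorm (a i) = 1) → resid X lh ah ≤ resid X lam a) :
    lh * (lh - rankOneInner X ah) = 0 ∧
      ∀ a : (i : Fin N) → Fin (I i) → ℝ, (∀ i, _root_.enorm (a i) = 1) →
        rankOneInner X a ≤ lh := by
  have hquad : ∀ μ a, 0 ≤ μ → (∀ i, _root_.enorm (a i) = 1) →
      lh ^ 2 - 2 * lh * rankOneInner X ah ≤ μ ^ 2 - 2 * μ * rankOneInner X a := by
    intro μ a hμ ha
    have := hmin μ a hμ ha
    rw [resid_eq_of_enorm_eq_one X _ hunit, resid_eq_of_enorm_eq_one X _ ha] at this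
    linarith
  have hslack := mul_sub_eq_zero_of_forall_sq_sub_le hlh fun μ hμ => hquad μ ah hμ hunit
  refine ⟨hslack, fun a ha => ?_⟩
  rcases le_or_gt (rankOneInner X a) 0 with hc | hc
  · exact hc.trans hlh
  · have := hquad _ a hc.le ha
    nlinarith

lemma le_of_forall_sq_sub_add_le {p : ℝ → ℝ} (hp : MonotoneOn p (Set.Ici 0)) {lh lp : ℝ}
    (hlh : 0 ≤ lh) (hlp : ∀ lam, 0 ≤ lam → (lp - lh) ^ 2 + p lp ≤ (lam - lh) ^ 2 + p lam) :
    lp ≤ lh := by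
  by_contra! hgt
  have hpen : p lh ≤ p lp := hp hlh (hlh.trans hgt.le) hgt.le
  have := hlp lh hlh
  nlinarith

theorem resid_add_le_of_isMin_of_monotoneOn {N : ℕ} {I : Fin N → ℕ}
    {X : ((i : Fin N) → Fin (I i)) → ℝ} {lh : ℝ} {ah : (i : Fin N) → Fin (I i) → ℝ}
    (hlh : 0 ≤ lh) (hunit : ∀ i, _root_.enorm (ah i) = 1)
    (hmin : ∀ (lam : ℝ) (a : (i : Fin N) → Fin (I i) → ℝ),
      0 ≤ lam → (∀ i, _root_.enorm (a i) = 1) → resid X lh ah ≤ resid X lam a)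
    {p : ℝ → ℝ} (hp : MonotoneOn p (Set.Ici 0)) {lp : ℝ}
    (hlp : ∀ lam, 0 ≤ lam → (lp - lh) ^ 2 + p lp ≤ (lam - lh) ^ 2 + p lam)
    {lam : ℝ} {a : (i : Fin N) → Fin (I i) → ℝ} (hlam : 0 ≤ lam)
    (ha : ∀ i, _root_.enorm (a i) = 1) :
    resid X lp ah + p lp ≤ resid X lam a + p lam := by
  obtain ⟨hslack, hle⟩ := mul_sub_eq_zero_and_rankOneInner_le_of_isMin hlh hunit hmin
  have hgap : lp * (lh - rankOneInner X ah) ≤ 0 := by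
    rw [← hslack]
    exact mul_le_mul_of_nonneg_right (le_of_forall_sq_sub_add_le hp hlh hlp)
      (sub_nonneg.mpr (hle ah hunit))
  rw [resid_eq_of_enorm_eq_one X _ hunit, resid_eq_of_enorm_eq_one X _ ha]
  linarith [hlp lam hlam, mul_le_mul_of_nonneg_left (hle a ha) hlam]

theorem stmt10_general {N : ℕ} {I : Fin N → ℕ} (X : ((i : Fin N) → Fin (I i)) → ℝ)
    (lamhat : ℝ) (ahat : (i : Fin N) → Fin (I i) → ℝ)
    (hlam : 0 ≤ lamhat) (hunit : ∀ i, _root_.enorm (ahat i) = 1)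
    (hmin : ∀ (lam : ℝ) (a : (i : Fin N) → Fin (I i) → ℝ),
      0 ≤ lam → (∀ i, _root_.enorm (a i) = 1) → resid X lamhat ahat ≤ resid X lam a)
    (σ : ℝ) (hσ : 0 < σ)
    (lamp : ℝ)
    (hlampmin : ∀ lam : ℝ, 0 ≤ lam →
      (lamp - lamhat) ^ 2 + (N : ℝ) * σ * lamp ^ ((2 : ℝ) / N) ≤
        (lam - lamhat) ^ 2 + (N : ℝ) * σ * lam ^ ((2 : ℝ) / N)) :
    ∀ (lam : ℝ) (a : (i : Fin N) → Fin (I i) → ℝ),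
      0 ≤ lam → (∀ i, _root_.enorm (a i) = 1) →
      resid X lamp ahat + (N : ℝ) * σ * lamp ^ ((2 : ℝ) / N) ≤
        resid X lam a + (N : ℝ) * σ * lam ^ ((2 : ℝ) / N) := by
  have hpen : MonotoneOn (fun lam : ℝ => (N : ℝ) * σ * lam ^ ((2 : ℝ) / N)) (Set.Ici 0) :=
    fun _ hx _ _ hxy => mul_le_mul_of_nonneg_left
      (Real.rpow_le_rpow hx hxy (by positivity)) (by positivity)
  intro lam a hl ha
  exact resid_add_le_of_isMin_of_monotoneOn hlam hunit hmin hpen hlampmin hl ha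

theorem stmt10 {N : ℕ} {I : Fin N → ℕ} (X : ((i : Fin N) → Fin (I i)) → ℝ)
    (lamhat : ℝ) (ahat : (i : Fin N) → Fin (I i) → ℝ)
    (hlam : 0 ≤ lamhat) (hunit : ∀ i, _root_.enorm (ahat i) = 1)
    (hmin : ∀ (lam : ℝ) (a : (i : Fin N) → Fin (I i) → ℝ),
      0 ≤ lam → (∀ i, _root_.enorm (a i) = 1) → resid X lamhat ahat ≤ resid X lam a)
    (σ : ℝ) (hσ : 0 < σ)
    (lamp : ℝ) (hlamp : 0 ≤ lamp)
    (hlampmin : ∀ lam : ℝ, 0 ≤ lam →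
      (lamp - lamhat) ^ 2 + (N : ℝ) * σ * lamp ^ ((2 : ℝ) / N) ≤
        (lam - lamhat) ^ 2 + (N : ℝ) * σ * lam ^ ((2 : ℝ) / N)) :
    ∀ (lam : ℝ) (a : (i : Fin N) → Fin (I i) → ℝ),
      0 ≤ lam → (∀ i, _root_.enorm (a i) = 1) →
      resid X lamp ahat + (N : ℝ) * σ * lamp ^ ((2 : ℝ) / N) ≤
        resid X lam a + (N : ℝ) * σ * lam ^ ((2 : ℝ) / N) :=
  stmt10_general X lamhat ahat hlam hunit hmin σ hσ lamp hlampmin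
end
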